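/- Let n ≥ 1, let p be an integer with 1 ≤ p ≤ n, let A and D be n×n real matrices, and suppose x ∈ ℝⁿ satisfies x_i − x_j ≥ D(i,j) for all i, j. Define L(i,j) := ⊕_p(l ↦ A(i,l) + D(l,j)) and U(i,j) := ⊕_p(l ↦ A(i,l) − D(j,l)). If A(i,j) < L(i,j) or A(i,j) > U(i,j), then (i,j) is inactive, i.e., (A ⊗_p x)_i ≠ A(i,j) + x_j. -/

import Mathlib

/-!
`⊕_p s ≤ v` holds exactly when at least `p` of the values `s l` are `≤ v`. Hence `⊕_p` is
monotone and commutes with adding a constant. For `x` in the zone of `D`,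
`A i l + D l j ≤ A i l + x l - x j ≤ A i l - D j l` for every `l`, so applying `⊕_p` gives
`L i j ≤ (A ⊗_p x) i - x j ≤ U i j`; an active entry `(i, j)` would therefore satisfy
`L i j ≤ A i j ≤ U i j`.
-/

/-- The maxmin-`p` value of `s : Fin n → ℝ`: the `p`-th smallest element (1-indexed) of the
multiset `{s 0, …, s (n-1)}`, counted with multiplicity. -/
noncomputable def maxmin {n : ℕ} (p : ℕ) (s : Fin n → ℝ) : ℝ :=
  (Multiset.sort (Multiset.map s (Finset.univ : Finset (Fin n)).val) (· ≤ ·)).getD (p - 1) 0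

/-- The maxmin-`p` matrix-vector product: `(A ⊗_p x)_i = ⊕_p (j ↦ A i j + x j)`. -/
noncomputable def mmProd {n : ℕ} (p : ℕ) (A : Fin n → Fin n → ℝ) (x : Fin n → ℝ) :
    Fin n → ℝ :=
  fun i => maxmin p (fun j => A i j + x j)

open Finset

theorem List.SortedLE.getElem_le_iff_lt_countP {α : Type*} [LinearOrder α] {L : List α}
    (hL : L.SortedLE) {k : ℕ} (hk : k < L.length) (v : α) :
    L[k] ≤ v ↔ k < L.countP (· ≤ v) := by
  constructor
  · intro hkv
    have hprefix : ∀ a ∈ L.take (k + 1), a ≤ v := by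
      intro a ha
      obtain ⟨m, hm, rfl⟩ := List.mem_iff_getElem.1 ha
      rw [List.getElem_take]
      exact (hL.getElem_le_getElem_of_le (by simp at hm; omega)).trans hkv
    calc k < (L.take (k + 1)).length := by simp; omega
      _ = (L.take (k + 1)).countP (· ≤ v) :=
        (List.countP_eq_length.2 fun a ha => decide_eq_true (hprefix a ha)).symm
      _ ≤ L.countP (· ≤ v) := (List.take_sublist _ _).countP_le
  · contrapose!
    intro hvk
    have hsuffix : (L.drop k).countP (· ≤ v) = 0 := by
      refine List.countP_eq_zero.2 fun a ha => ?_
      obtain ⟨m, hm, rfl⟩ := List.mem_iff_getElem.1 ha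
      rw [List.getElem_drop, decide_eq_true_iff, not_le]
      exact hvk.trans_le (hL.getElem_le_getElem_of_le (Nat.le_add_right k m))
    calc L.countP (· ≤ v) = (L.take k).countP (· ≤ v) + (L.drop k).countP (· ≤ v) := by
          rw [← List.countP_append, List.take_append_drop]
      _ ≤ (L.take k).length := by rw [hsuffix, add_zero]; exact List.countP_le_length
      _ ≤ k := List.length_take_le _ _

section maxmin

-- `p - 1 < n` says the index `p - 1` is in range; otherwise `maxmin` is the junk value `0`.
-- `p = 0` is allowed and behaves like `p = 1`.
variable {n p : ℕ}

theorem maxmin_le_iff (hp : p - 1 < n) (s : Fin n → ℝ) (v : ℝ) :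
    maxmin p s ≤ v ↔ p - 1 < #{l | s l ≤ v} := by
  set M := Multiset.map s (univ : Finset (Fin n)).val
  have hlen : p - 1 < (M.sort (· ≤ ·)).length := by simpa [M] using hp
  rw [maxmin, List.getD_eq_getElem _ _ hlen,
    (M.pairwise_sort _).sortedLE.getElem_le_iff_lt_countP hlen, ← Multiset.coe_countP,
    Multiset.sort_eq, Multiset.countP_map, card_def, filter_val]

theorem maxmin_monotone (hp : p - 1 < n) : Monotone (maxmin (n := n) p) := by
  intro s t hst
  rw [maxmin_le_iff hp]
  refine ((maxmin_le_iff hp t _).1 le_rfl).trans_le (card_le_card fun l => ?_)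
  simp only [mem_filter, mem_univ, true_and]
  exact (hst l).trans

theorem maxmin_add_const (hp : p - 1 < n) (s : Fin n → ℝ) (c : ℝ) :
    maxmin p (fun l => s l + c) = maxmin p s + c := by
  refine eq_of_forall_ge_iff fun v => ?_
  simp only [maxmin_le_iff hp, ← le_sub_iff_add_le]

end maxmin

theorem inactive_entry_of_LU_general (n p : ℕ) (hpn : p ≤ n)
    (A D : Fin n → Fin n → ℝ) (x : Fin n → ℝ)
    (hzone : ∀ i j, x i - x j ≥ D i j)
    (i j : Fin n)
    (h : A i j < maxmin p (fun l => A i l + D l j) ∨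
         A i j > maxmin p (fun l => A i l - D j l)) :
    mmProd p A x i ≠ A i j + x j := by
  have hp : p - 1 < n := by have := i.pos; omega
  intro hrow
  have hshift : maxmin p (fun l => A i l + x l + -x j) = A i j := by
    rw [maxmin_add_const hp]
    exact (add_neg_eq_iff_eq_add).2 hrow
  rcases h with hL | hU
  · refine hL.not_ge (hshift ▸ maxmin_monotone hp fun l => ?_)
    linarith [hzone l j]
  · refine hU.not_ge (hshift ▸ maxmin_monotone hp fun l => ?_)
    linarith [hzone j l]

/-- If `A i j < L i j` or `A i j > U i j` (where `L i j := ⊕_p(l ↦ A i l + D l j)` and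
`U i j := ⊕_p(l ↦ A i l − D j l)`), then `(i,j)` is inactive with respect to `p` and any
`x` in the zone of `D`: `(A ⊗_p x)_i ≠ A i j + x j`. -/
theorem inactive_entry_of_LU (n p : ℕ) (hn : 1 ≤ n) (hp1 : 1 ≤ p) (hpn : p ≤ n)
    (A D : Fin n → Fin n → ℝ) (x : Fin n → ℝ)
    (hzone : ∀ i j, x i - x j ≥ D i j)
    (i j : Fin n)
    (h : A i j < maxmin p (fun l => A i l + D l j) ∨
         A i j > maxmin p (fun l => A i l - D j l)) :
    mmProd p A x i ≠ A i j + x j :=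
  inactive_entry_of_LU_general n p hpn A D x hzone i j h
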